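/- arXiv:1810.10089 — 2 statements merged into one kernel-verified Lean document; each statement's English description precedes it below -/
import Mathlib

section
/- Every maximal set of diameter 1 in the plane has constant width 1: for every unit vector u, the width of S in direction u, namely sup_{p∈S} ⟨p,u⟩ − inf_{p∈S} ⟨p,u⟩, equals 1. -/
/-- An orbiform of unit diameter: a maximal set of diameter 1 in the plane. -/
def IsOrbiform (S : Set (EuclideanSpace ℝ (Fin 2))) : Prop :=
  Metric.diam S = 1 ∧
    ∀ T : Set (EuclideanSpace ℝ (Fin 2)), Metric.diam T = 1 → S ⊆ T → T = S

/-!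
A maximal set `S` of diameter 1 is the intersection of the unit balls centred at its points, hence
compact. Let `q` maximise `⟪·, u⟫` on `S`; it suffices to show `q - u ∈ S`. Call `v` a unit chord
at `q` if `‖v‖ = 1` and `q - v ∈ S`. If some `w` with `0 < ⟪u, w⟫` made an obtuse angle with every
unit chord, compactness would let `q` move a little in direction `w` without leaving `S`,
contradicting maximality. By separation, some `s • u` with `0 ≤ s ≤ 1` therefore lies in the closed
convex hull of the unit chords. For `y ∈ S`, the condition `‖(q - y) - v‖ ≤ 1` reads
`‖q - y‖ ^ 2 ≤ 2 * ⟪q - y, v⟫`, a half-space in `v` that is stable under scaling up; so it holds for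
`s • u`, hence for `u`, and `q - u` is within distance 1 of every point of `S`.
-/

open Metric Set RealInnerProductSpace

theorem mem_iff_forall_dist_le_of_maximal {X : Type*} [PseudoMetricSpace X] {S : Set X}
    (hdiam : diam S = 1) (hmax : ∀ T : Set X, diam T = 1 → S ⊆ T → T = S) (x : X) :
    x ∈ S ↔ ∀ y ∈ S, dist x y ≤ 1 := by
  have hbdd : Bornology.IsBounded S := by
    by_contra h
    rw [diam_eq_zero_of_unbounded h] at hdiam
    exact zero_ne_one hdiam
  refine ⟨fun hx y hy => hdiam ▸ dist_le_diam_of_mem hbdd hx hy, fun hx => ?_⟩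
  have hle : diam (insert x S) ≤ 1 := by
    refine diam_le_of_forall_dist_le zero_le_one ?_
    simp only [forall_mem_insert, dist_self, zero_le_one, true_and]
    exact ⟨hx, fun y hy => ⟨by rw [dist_comm]; exact hx y hy,
      fun z hz => hdiam ▸ dist_le_diam_of_mem hbdd hy hz⟩⟩
  have hge : 1 ≤ diam (insert x S) :=
    hdiam ▸ diam_mono (subset_insert x S) (hbdd.insert x)
  rw [← hmax _ (le_antisymm hle hge) (subset_insert x S)]
  exact mem_insert x S

theorem isCompact_of_forall_mem_iff {X : Type*} [PseudoMetricSpace X] [ProperSpace X]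
    {S : Set X} (hS : ∀ x, x ∈ S ↔ ∀ y ∈ S, dist x y ≤ 1) : IsCompact S := by
  have hS_eq : S = ⋂ y ∈ S, closedBall y 1 := by
    ext x
    simp only [mem_iInter₂, mem_closedBall]
    exact hS x
  refine isCompact_of_isClosed_isBounded ?_ (isBounded_iff.2 ⟨1, fun x hx => (hS x).1 hx⟩)
  rw [hS_eq]
  exact isClosed_biInter fun y _ => isClosed_closedBall

section InnerProductSpace

variable {E : Type*} [NormedAddCommGroup E] [InnerProductSpace ℝ E]

theorem norm_sub_le_one_iff_sq_le_two_inner {z v : E} (hv : ‖v‖ = 1) :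
    ‖z - v‖ ≤ 1 ↔ ‖z‖ ^ 2 ≤ 2 * ⟪z, v⟫ := by
  rw [← sq_le_one_iff₀ (norm_nonneg _), norm_sub_sq_real, hv]
  constructor <;> intro h <;> linarith

theorem convex_setOf_sq_le_two_inner (z : E) : Convex ℝ {v : E | ‖z‖ ^ 2 ≤ 2 * ⟪z, v⟫} :=
  convex_halfSpace_ge ⟨fun v w => by rw [inner_add_right, mul_add],
    fun c v => by rw [real_inner_smul_right, smul_eq_mul]; ring⟩ _

theorem isClosed_setOf_sq_le_two_inner (z : E) : IsClosed {v : E | ‖z‖ ^ 2 ≤ 2 * ⟪z, v⟫} :=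
  isClosed_le continuous_const (by fun_prop)

theorem sq_le_two_inner_of_sq_le_two_inner_smul {z u : E} {s : ℝ} (hs : s ∈ Icc (0 : ℝ) 1)
    (h : ‖z‖ ^ 2 ≤ 2 * ⟪z, s • u⟫) : ‖z‖ ^ 2 ≤ 2 * ⟪z, u⟫ := by
  rw [real_inner_smul_right] at h
  rcases le_or_gt 0 ⟪z, u⟫ with hzu | hzu
  · nlinarith [hs.1, hs.2]
  · have hz : z = 0 := by
      rw [← norm_eq_zero]
      nlinarith [hs.1, norm_nonneg z]
    simp [hz] at hzu

theorem exists_pos_forall_norm_add_smul_le_one (w : E) {m : ℝ} (hm : 0 < m) :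
    ∃ ε : ℝ, 0 < ε ∧ ∀ z : E, ‖z‖ ≤ 1 → m ≤ max (1 - ‖z‖ ^ 2) (-⟪z, w⟫) → ‖z + ε • w‖ ≤ 1 := by
  refine ⟨min 1 (m / (‖w‖ + 1) ^ 2), by positivity, fun z hz hzm => ?_⟩
  set ε := min 1 (m / (‖w‖ + 1) ^ 2)
  have hε0 : 0 < ε := by positivity
  have hε1 : ε ≤ 1 := min_le_left _ _
  have hεm : ε * (‖w‖ + 1) ^ 2 ≤ m := by
    have := min_le_right 1 (m / (‖w‖ + 1) ^ 2)
    rwa [le_div_iff₀ (by positivity)] at this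
  have hεw : ε * ‖w‖ ^ 2 ≤ m := by nlinarith [norm_nonneg w]
  have hzw : ⟪z, w⟫ ≤ ‖w‖ := by
    nlinarith [real_inner_le_norm z w, norm_nonneg z, norm_nonneg w]
  rw [← sq_le_one_iff₀ (norm_nonneg _), norm_add_sq_real, real_inner_smul_right, norm_smul,
    Real.norm_of_nonneg hε0.le]
  rcases le_max_iff.1 hzm with h | h
  · nlinarith [mul_le_mul_of_nonneg_left hzw hε0.le, norm_nonneg w,
      mul_le_mul_of_nonneg_right hε1 (mul_nonneg hε0.le (sq_nonneg ‖w‖))]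
  · nlinarith [mul_le_mul_of_nonneg_left h hε0.le, mul_le_mul_of_nonneg_left hεw hε0.le,
      pow_le_one₀ (n := 2) (norm_nonneg z) hz]

theorem exists_pos_add_smul_mem {S : Set E} (hS : ∀ x, x ∈ S ↔ ∀ y ∈ S, dist x y ≤ 1)
    (hSc : IsCompact S) {q w : E} (hq : q ∈ S)
    (hw : ∀ v, ‖v‖ = 1 → q - v ∈ S → ⟪v, w⟫ < 0) : ∃ ε : ℝ, 0 < ε ∧ q + ε • w ∈ S := by
  have hpos : ∀ y ∈ S, 0 < max (1 - ‖q - y‖ ^ 2) (-⟪q - y, w⟫) := by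
    intro y hy
    have hqy : ‖q - y‖ ≤ 1 := by rw [← dist_eq_norm]; exact (hS q).1 hq y hy
    rcases hqy.lt_or_eq with hlt | heq
    · exact lt_max_of_lt_left (by nlinarith [norm_nonneg (q - y)])
    · exact lt_max_of_lt_right (neg_pos.2 (hw _ heq (by rwa [sub_sub_cancel])))
  obtain ⟨m, hm, hmS⟩ := hSc.exists_forall_le' (by fun_prop) hpos
  obtain ⟨ε, hε, hεS⟩ := exists_pos_forall_norm_add_smul_le_one w hm
  refine ⟨ε, hε, (hS _).2 fun y hy => ?_⟩
  rw [dist_eq_norm, add_sub_right_comm]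
  exact hεS _ (by rw [← dist_eq_norm]; exact (hS q).1 hq y hy) (hmS y hy)

theorem exists_unit_chord_inner_nonneg {S : Set E}
    (hS : ∀ x, x ∈ S ↔ ∀ y ∈ S, dist x y ≤ 1) (hSc : IsCompact S) {q u w : E} (hq : q ∈ S)
    (hmax : IsMaxOn (⟪·, u⟫) S q) (hw : 0 < ⟪u, w⟫) :
    ∃ v, ‖v‖ = 1 ∧ q - v ∈ S ∧ 0 ≤ ⟪v, w⟫ := by
  by_contra! hneg
  obtain ⟨ε, hε, hεS⟩ := exists_pos_add_smul_mem hS hSc hq hneg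
  have hle : ⟪q + ε • w, u⟫ ≤ ⟪q, u⟫ := hmax hεS
  rw [inner_add_left, real_inner_smul_left, real_inner_comm u w] at hle
  nlinarith

theorem exists_smul_mem_closedConvexHull [ProperSpace E] {V : Set E} (hV : V ⊆ closedBall 0 1)
    {u : E} (hu : ‖u‖ = 1) (h : ∀ w, 0 < ⟪u, w⟫ → ∃ v ∈ V, 0 ≤ ⟪v, w⟫) :
    ∃ s ∈ Icc (0 : ℝ) 1, s • u ∈ closedConvexHull ℝ V := by
  by_contra! hdisj
  set C := closedConvexHull ℝ V
  set T := (LinearMap.toSpanSingleton ℝ E u) '' Icc 0 1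
  have hCc : IsCompact C :=
    (isCompact_closedBall 0 1).of_isClosed_subset isClosed_closedConvexHull
      (closedConvexHull_min hV (convex_closedBall 0 1) isClosed_closedBall)
  have hTc : IsCompact T :=
    isCompact_Icc.image (LinearMap.toSpanSingleton ℝ E u).continuous_of_finiteDimensional
  have hCT : Disjoint C T := disjoint_left.2 fun x hxC ⟨s, hs, hsx⟩ =>
    hdisj s hs (by rwa [← LinearMap.toSpanSingleton_apply, hsx])
  obtain ⟨f, a, b, hfC, hab, hfT⟩ := geometric_hahn_banach_compact_closed
    convex_closedConvexHull hCc ((convex_Icc 0 1).linear_image _) hTc.isClosed hCT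
  have hb : b < 0 := by simpa using hfT 0 ⟨0, by simp⟩
  have hbu : b < f u := hfT u ⟨1, by simp⟩
  -- tilting the separating functional towards `u` yields a direction contradicting `h`
  set δ := -(a + b) / 2 with hδ_def
  have hδ : 0 < δ := by linarith
  set w := (InnerProductSpace.toDual ℝ E).symm f + δ • u
  have hw : ∀ x, ⟪x, w⟫ = f x + δ * ⟪x, u⟫ := fun x => by
    rw [inner_add_right, real_inner_comm, InnerProductSpace.toDual_symm_apply,
      real_inner_smul_right]
  have huw : 0 < ⟪u, w⟫ := by
    rw [hw, real_inner_self_eq_norm_sq, hu]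
    linarith
  obtain ⟨v, hvV, hvw⟩ := h w huw
  have hfv : f v < a := hfC v (subset_closedConvexHull hvV)
  have hvu : ⟪v, u⟫ ≤ 1 := by
    have hv : ‖v‖ ≤ 1 := by simpa using hV hvV
    nlinarith [real_inner_le_norm v u, norm_nonneg v]
  rw [hw] at hvw
  linarith [mul_le_mul_of_nonneg_left hvu hδ.le]

theorem sub_mem_of_isMaxOn_inner [ProperSpace E] {S : Set E}
    (hS : ∀ x, x ∈ S ↔ ∀ y ∈ S, dist x y ≤ 1) {q u : E} (hq : q ∈ S)
    (hmax : IsMaxOn (⟪·, u⟫) S q) (hu : ‖u‖ = 1) : q - u ∈ S := by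
  set V := {v : E | ‖v‖ = 1 ∧ q - v ∈ S}
  obtain ⟨s, hs, hsV⟩ := exists_smul_mem_closedConvexHull (V := V)
    (fun v hv => by simp [hv.1]) hu fun w hw => by
      obtain ⟨v, hv, hvS, hvw⟩ :=
        exists_unit_chord_inner_nonneg hS (isCompact_of_forall_mem_iff hS) hq hmax hw
      exact ⟨v, ⟨hv, hvS⟩, hvw⟩
  refine (hS _).2 fun y hy => ?_
  have hVK : V ⊆ {v | ‖q - y‖ ^ 2 ≤ 2 * ⟪q - y, v⟫} := fun v ⟨hv, hvS⟩ => by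
    rw [mem_ofPred_eq, ← norm_sub_le_one_iff_sq_le_two_inner hv, sub_right_comm, ← dist_eq_norm]
    exact (hS _).1 hvS y hy
  have hsu := closedConvexHull_min hVK (convex_setOf_sq_le_two_inner _)
    (isClosed_setOf_sq_le_two_inner _) hsV
  rw [dist_eq_norm, sub_right_comm, norm_sub_le_one_iff_sq_le_two_inner hu]
  exact sq_le_two_inner_of_sq_le_two_inner_smul hs hsu

theorem sSup_sub_sInf_inner_eq_one [ProperSpace E] {S : Set E}
    (hS : ∀ x, x ∈ S ↔ ∀ y ∈ S, dist x y ≤ 1) (hne : S.Nonempty) {u : E} (hu : ‖u‖ = 1) :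
    sSup ((⟪·, u⟫) '' S) - sInf ((⟪·, u⟫) '' S) = 1 := by
  obtain ⟨q, hq, hmax⟩ :=
    (isCompact_of_forall_mem_iff hS).exists_isMaxOn hne (f := (⟪·, u⟫)) (by fun_prop)
  have hsup : sSup ((⟪·, u⟫) '' S) = ⟪q, u⟫ :=
    IsGreatest.csSup_eq ⟨mem_image_of_mem _ hq, forall_mem_image.2 fun y hy => hmax hy⟩
  have hinf : sInf ((⟪·, u⟫) '' S) = ⟪q, u⟫ - 1 := by
    refine IsLeast.csInf_eq ⟨⟨q - u, sub_mem_of_isMaxOn_inner hS hq hmax hu, ?_⟩,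
      forall_mem_image.2 fun y hy => ?_⟩
    · simp only [inner_sub_left, real_inner_self_eq_norm_sq, hu, one_pow]
    · have hqy : ‖q - y‖ ≤ 1 := by rw [← dist_eq_norm]; exact (hS q).1 hq y hy
      have := real_inner_le_norm (q - y) u
      rw [inner_sub_left, hu] at this
      linarith
  rw [hsup, hinf, sub_sub_cancel]

end InnerProductSpace

theorem orbiform_constant_width (S : Set (EuclideanSpace ℝ (Fin 2)))
    (h : IsOrbiform S) (u : EuclideanSpace ℝ (Fin 2)) (hu : ‖u‖ = 1) :
    sSup ((fun p : EuclideanSpace ℝ (Fin 2) => (inner ℝ p u : ℝ)) '' S) -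
      sInf ((fun p : EuclideanSpace ℝ (Fin 2) => (inner ℝ p u : ℝ)) '' S) = 1 := by
  obtain ⟨hdiam, hmax⟩ := h
  have hne : S.Nonempty := nonempty_iff_ne_empty.2 fun hS => by simp [hS] at hdiam
  exact sSup_sub_sInf_inner_eq_one (mem_iff_forall_dist_le_of_maximal hdiam hmax) hne hu
end

section
/- The regular hexagon with distance 1 between opposite sides has area √3/2, and Pál's truncated hexagon (the hexagon with two opposite corners cut off along edges of the inscribed regular dodecagon of width 1) has area 2 − 2/√3. -/
open Metric MeasureTheory Real

noncomputable section

/-- A point of the Euclidean plane with given coordinates. -/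
def pt (x y : ℝ) : EuclideanSpace ℝ (Fin 2) :=
  (WithLp.equiv 2 (Fin 2 → ℝ)).symm ![x, y]

/-- Regular hexagon of width 1 (distance 1 between opposite sides), centered at the
origin, with a vertex at the top: the convex hull of its six vertices, which lie at
distance `1/√3` from the center at angles `π/2 - k·π/3`. -/
def hexagon : Set (EuclideanSpace ℝ (Fin 2)) :=
  convexHull ℝ (Set.range fun k : Fin 6 =>
    pt (Real.cos (π / 2 - k * (π / 3)) / Real.sqrt 3)
       (Real.sin (π / 2 - k * (π / 3)) / Real.sqrt 3))

/-- Pál's covering: the width-1 hexagon with the two corners at angles `-π/6` and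
`-5π/6` cut off along two sides of the inscribed regular dodecagon of width 1,
i.e. along lines at distance `1/2` from the center perpendicular to those corner
directions. -/
def palCover : Set (EuclideanSpace ℝ (Fin 2)) :=
  hexagon ∩
    {p | (inner ℝ p (pt (Real.cos (-(π / 6))) (Real.sin (-(π / 6)))) : ℝ) ≤ 1 / 2} ∩
    {p | (inner ℝ p (pt (Real.cos (-(5 * π / 6))) (Real.sin (-(5 * π / 6)))) : ℝ) ≤ 1 / 2}

/-!
In coordinates `(x, y)` the hexagon is `{|x| ≤ 1/2, |x| + √3 |y| ≤ 1}`: the convex hull of the six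
vertices lies in this set because the set is convex, and conversely each point of it lies on a
vertical segment whose ends are convex combinations of a vertex on the `y`-axis and a vertex on
the line `x = ±1/2`. So the hexagon is the region over `[-1/2, 1/2]` between the graphs of
`∓(1 - |x|)/√3`, and Pál's two cuts `±√3 x - y ≤ 1` only raise the lower graph to
`max (-(1 - |x|)/√3) (√3 |x| - 1)`. Both areas are then twice the integral over `[0, 1/2]` of a
piecewise affine height; for Pál's covering the lower graph changes branch at `|x| = (√3 - 1)/2`.
-/

lemma sqrt_three_mul_self : √3 * √3 = 3 := Real.mul_self_sqrt (by norm_num)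

lemma one_lt_sqrt_three : 1 < √3 := by
  rw [Real.lt_sqrt zero_le_one]; norm_num

lemma sqrt_three_lt_two : √3 < 2 := by
  rw [Real.sqrt_lt' two_pos]; norm_num

lemma pt_apply_zero (x y : ℝ) : pt x y 0 = x := rfl

lemma pt_apply_one (x y : ℝ) : pt x y 1 = y := rfl

lemma pt_eta (p : EuclideanSpace ℝ (Fin 2)) : pt (p 0) (p 1) = p := by
  ext i; fin_cases i <;> rfl

lemma inner_pt (p : EuclideanSpace ℝ (Fin 2)) (a b : ℝ) :
    inner ℝ p (pt a b) = p 0 * a + p 1 * b := by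
  simp [PiLp.inner_apply, Fin.sum_univ_two, pt_apply_zero, pt_apply_one, mul_comm]

lemma smul_pt_add_smul_pt (s t a b c d : ℝ) :
    s • pt a b + t • pt c d = pt (s * a + t * c) (s * b + t * d) := by
  ext i; fin_cases i <;> rfl

lemma Convex.pt_mem_of_abs_le {K : Set (EuclideanSpace ℝ (Fin 2))} (hK : Convex ℝ K)
    {x y h : ℝ} (hlo : pt x (-h) ∈ K) (hhi : pt x h ∈ K) (hy : |y| ≤ h) : pt x y ∈ K := by
  have hline (s : ℝ) : AffineMap.lineMap (pt x 0) (pt x 1) s = pt x s := by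
    ext i; fin_cases i <;> simp [AffineMap.lineMap_apply, pt_apply_zero, pt_apply_one]
  have hconv : Convex ℝ {s : ℝ | pt x s ∈ K} := by
    simpa only [Set.preimage, hline] using hK.affine_preimage (AffineMap.lineMap (pt x 0) (pt x 1))
  exact hconv.ordConnected.out hlo hhi (abs_le.mp hy)

lemma Convex.pt_mem_of_trapezoid {K : Set (EuclideanSpace ℝ (Fin 2))} (hK : Convex ℝ K)
    {a b c t y : ℝ} (ha : pt 0 a ∈ K) (ha' : pt 0 (-a) ∈ K) (hb : pt c b ∈ K)
    (hb' : pt c (-b) ∈ K) (ht : t ∈ Set.Icc 0 1) (hy : |y| ≤ (1 - t) * a + t * b) :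
    pt (t * c) y ∈ K := by
  obtain ⟨ht0, ht1⟩ := ht
  have hedge {u v : ℝ} (hu : pt 0 u ∈ K) (hv : pt c v ∈ K) :
      pt (t * c) ((1 - t) * u + t * v) ∈ K := by
    simpa [smul_pt_add_smul_pt] using hK hu hv (sub_nonneg.2 ht1) ht0 (by ring)
  refine hK.pt_mem_of_abs_le ?_ (hedge ha hb) hy
  convert hedge ha' hb' using 2
  ring

def planeCoords : EuclideanSpace ℝ (Fin 2) ≃ᵐ ℝ × ℝ :=
  (MeasurableEquiv.toLp 2 (Fin 2 → ℝ)).symm.trans MeasurableEquiv.finTwoArrow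

lemma planeCoords_apply (p : EuclideanSpace ℝ (Fin 2)) : planeCoords p = (p 0, p 1) := rfl

lemma measurePreserving_planeCoords : MeasurePreserving planeCoords :=
  (volume_preserving_finTwoArrow ℝ).comp
    (EuclideanSpace.volume_preserving_symm_measurableEquiv_toLp (Fin 2))

section closedRegionBetween

variable {α : Type*}

def closedRegionBetween (f g : α → ℝ) (s : Set α) : Set (α × ℝ) :=
  {p | p.1 ∈ s ∧ p.2 ∈ Set.Icc (f p.1) (g p.1)}

theorem volume_closedRegionBetween_eq_integral [MeasurableSpace α] {μ : Measure α} [SFinite μ]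
    {f g : α → ℝ} {s : Set α} (hf : Measurable f) (hg : Measurable g) (hs : MeasurableSet s)
    (f_int : IntegrableOn f s μ) (g_int : IntegrableOn g s μ) (hfg : ∀ x ∈ s, f x ≤ g x) :
    μ.prod volume (closedRegionBetween f g s) = ENNReal.ofReal (∫ x in s, (g - f) x ∂μ) := by
  have hslice (x : α) : volume (Prod.mk x ⁻¹' closedRegionBetween f g s) =
      s.indicator (fun x => ENNReal.ofReal ((g - f) x)) x := by
    by_cases hx : x ∈ s
    · rw [Set.indicator_of_mem hx, Pi.sub_apply, ← Real.volume_Icc]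
      congr 1
      ext y
      simp [closedRegionBetween, hx]
    · simp [closedRegionBetween, hx]
  have hmeas : MeasurableSet (closedRegionBetween f g s) :=
    measurableSet_region_between_cc hf hg hs
  rw [Measure.prod_apply hmeas, funext hslice,
    lintegral_indicator hs, ofReal_integral_eq_lintegral_ofReal (g_int.sub f_int)]
  exact (ae_restrict_iff' hs).2 (.of_forall fun x hx => sub_nonneg.2 (hfg x hx))

end closedRegionBetween

theorem intervalIntegral.integral_comp_abs {f : ℝ → ℝ} (hf : Continuous f) {a : ℝ}
    (ha : 0 ≤ a) :
    ∫ x in -a..a, f |x| = 2 * ∫ x in 0..a, f x := by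
  have hfa : Continuous fun x => f |x| := hf.comp continuous_abs
  have hpos : ∫ x in 0..a, f |x| = ∫ x in 0..a, f x :=
    integral_congr fun x hx => by rw [abs_of_nonneg (Set.uIcc_of_le ha ▸ hx).1]
  have hneg : ∫ x in -a..0, f |x| = ∫ x in 0..a, f |x| := by
    simpa only [abs_neg, neg_zero] using (integral_comp_neg (a := 0) (b := a) fun x => f |x|).symm
  rw [← integral_add_adjacent_intervals (b := 0) (hfa.intervalIntegrable _ _)
    (hfa.intervalIntegrable _ _), hneg, hpos, two_mul]

theorem volume_closedRegionBetween_comp_abs {φ ψ : ℝ → ℝ} (hφ : Continuous φ) (hψ : Continuous ψ)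
    {a : ℝ} (ha : 0 ≤ a) (hφψ : ∀ t ∈ Set.Icc 0 a, φ t ≤ ψ t) :
    volume (closedRegionBetween (fun x => φ |x|) (fun x => ψ |x|) (Set.Icc (-a) a)) =
      ENNReal.ofReal (2 * ∫ t in 0..a, ψ t - φ t) := by
  have hφa : Continuous fun x => φ |x| := hφ.comp continuous_abs
  have hψa : Continuous fun x => ψ |x| := hψ.comp continuous_abs
  rw [Measure.volume_eq_prod, volume_closedRegionBetween_eq_integral hφa.measurable hψa.measurable
    measurableSet_Icc hφa.integrableOn_Icc hψa.integrableOn_Icc, integral_Icc_eq_integral_Ioc,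
    ← intervalIntegral.integral_of_le (by linarith)]
  · exact congrArg ENNReal.ofReal (intervalIntegral.integral_comp_abs (hψ.sub hφ) ha)
  · intro x hx
    exact hφψ |x| ⟨abs_nonneg x, abs_le.2 hx⟩

theorem integral_const_add_mul (a b c d : ℝ) :
    ∫ x in a..b, (c + d * x) = c * (b - a) + d * (b ^ 2 - a ^ 2) / 2 := by
  rw [intervalIntegral.integral_add intervalIntegrable_const
    ((continuous_const_mul d).intervalIntegrable _ _),
    intervalIntegral.integral_const_mul, integral_id, intervalIntegral.integral_const, smul_eq_mul]
  ring

def hexagonVertex : Fin 6 → EuclideanSpace ℝ (Fin 2) :=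
  ![pt 0 (1 / √3), pt (1 / 2) (1 / (2 * √3)), pt (1 / 2) (-(1 / (2 * √3))),
    pt 0 (-(1 / √3)), pt (-(1 / 2)) (-(1 / (2 * √3))), pt (-(1 / 2)) (1 / (2 * √3))]

lemma hexagon_eq_convexHull : hexagon = convexHull ℝ (Set.range hexagonVertex) := by
  have h2 : (2 : ℝ) * (π / 3) = π - π / 3 := by ring
  have h3 : (3 : ℝ) * (π / 3) = π := by ring
  have h4 : (4 : ℝ) * (π / 3) = π / 3 + π := by ring
  have h5 : (5 : ℝ) * (π / 3) = 2 * π - π / 3 := by ring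
  unfold hexagon hexagonVertex
  congr 2
  funext k
  simp only [Real.cos_pi_div_two_sub, Real.sin_pi_div_two_sub]
  fin_cases k <;> norm_num [h2, h3, h4, h5, Real.sin_pi_sub, Real.cos_pi_sub, Real.sin_add_pi,
    Real.cos_add_pi, Real.sin_two_pi_sub, Real.cos_two_pi_sub] <;> congr 1 <;> field_simp

lemma convexOn_abs_apply (i : Fin 2) :
    ConvexOn ℝ Set.univ (fun p : EuclideanSpace ℝ (Fin 2) => |p i|) := by
  simpa [Function.comp_def] using (convexOn_norm convex_univ).comp_linearMap
    (EuclideanSpace.proj i : EuclideanSpace ℝ (Fin 2) →L[ℝ] ℝ).toLinearMap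

lemma convex_hexagon_inequalities :
    Convex ℝ {p : EuclideanSpace ℝ (Fin 2) | |p 0| ≤ 1 / 2 ∧ |p 0| + √3 * |p 1| ≤ 1} := by
  have h0 := (convexOn_abs_apply 0).convex_le (1 / 2)
  have h01 := ((convexOn_abs_apply 0).add ((convexOn_abs_apply 1).smul (by positivity :
    (0 : ℝ) ≤ √3))).convex_le 1
  simpa only [Set.mem_univ, true_and, Set.sep_univ, Set.ofPred_and, Pi.add_apply, smul_eq_mul]
    using h0.inter h01

lemma hexagon_eq : hexagon = {p | |p 0| ≤ 1 / 2 ∧ |p 0| + √3 * |p 1| ≤ 1} := by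
  apply Set.Subset.antisymm
  · rw [hexagon_eq_convexHull]
    refine convexHull_min (Set.range_subset_iff.2 fun k => ?_) convex_hexagon_inequalities
    fin_cases k <;>
      simp [hexagonVertex, pt_apply_zero, pt_apply_one, abs_of_nonneg (Real.sqrt_nonneg 3)] <;>
      norm_num
  · rintro p ⟨hx, hxy⟩
    rw [← pt_eta p, hexagon_eq_convexHull]
    have hv (k : Fin 6) : hexagonVertex k ∈ convexHull ℝ (Set.range hexagonVertex) :=
      subset_convexHull ℝ _ (Set.mem_range_self k)
    have ht : 2 * |p 0| ∈ Set.Icc (0 : ℝ) 1 := ⟨by positivity, by linarith⟩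
    have hy : |p 1| ≤ (1 - 2 * |p 0|) * (1 / √3) + 2 * |p 0| * (1 / (2 * √3)) := by
      rw [show (1 - 2 * |p 0|) * (1 / √3) + 2 * |p 0| * (1 / (2 * √3)) = (1 - |p 0|) / √3 by
        field_simp; ring, le_div_iff₀ (by positivity)]
      linarith
    rcases abs_choice (p 0) with h | h
    · convert (convex_convexHull ℝ _).pt_mem_of_trapezoid (hv 0) (hv 3) (hv 1) (hv 2) ht hy
        using 2
      rw [h]; ring
    · convert (convex_convexHull ℝ _).pt_mem_of_trapezoid (hv 0) (hv 3) (hv 5) (hv 4) ht hy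
        using 2
      rw [h]; ring

-- Boundary graphs over the abscissa `x`, written as functions of `t = |x|`.
def hexagonTop (t : ℝ) : ℝ := (1 - t) / √3

def palCoverBottom (t : ℝ) : ℝ := max (-hexagonTop t) (√3 * t - 1)

lemma continuous_hexagonTop : Continuous hexagonTop :=
  (continuous_const.sub continuous_id).div_const _

lemma continuous_palCoverBottom : Continuous palCoverBottom :=
  continuous_hexagonTop.neg.max ((continuous_const_mul _).sub continuous_const)

lemma hexagonTop_nonneg {t : ℝ} (ht : t ≤ 1) : 0 ≤ hexagonTop t :=
  div_nonneg (by linarith) (by positivity)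

lemma mem_Icc_hexagonTop_iff {x y : ℝ} :
    y ∈ Set.Icc (-hexagonTop |x|) (hexagonTop |x|) ↔ |x| + √3 * |y| ≤ 1 := by
  rw [Set.mem_Icc, ← abs_le, hexagonTop, le_div_iff₀ (by positivity)]
  constructor <;> intro h <;> linarith

lemma hexagon_eq_preimage : hexagon = planeCoords ⁻¹'
    closedRegionBetween (fun x => -hexagonTop |x|) (fun x => hexagonTop |x|)
      (Set.Icc (-(1 / 2)) (1 / 2)) := by
  ext p
  simp only [hexagon_eq, Set.mem_preimage, planeCoords_apply, closedRegionBetween,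
    Set.mem_ofPred_eq, mem_Icc_hexagonTop_iff]
  rw [Set.mem_Icc, abs_le]

lemma palCover_eq_preimage : palCover = planeCoords ⁻¹'
    closedRegionBetween (fun x => palCoverBottom |x|) (fun x => hexagonTop |x|)
      (Set.Icc (-(1 / 2)) (1 / 2)) := by
  have hc : Real.cos (-(5 * π / 6)) = -(√3 / 2) := by
    rw [Real.cos_neg, show 5 * π / 6 = π - π / 6 by ring, Real.cos_pi_sub, Real.cos_pi_div_six]
  have hs : Real.sin (-(5 * π / 6)) = -(1 / 2) := by
    rw [Real.sin_neg, show 5 * π / 6 = π - π / 6 by ring, Real.sin_pi_sub, Real.sin_pi_div_six]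
  ext p
  have hcut : √3 * |p 0| - 1 ≤ p 1 ↔
      p 0 * (√3 / 2) + p 1 * -(1 / 2) ≤ 1 / 2 ∧ p 0 * -(√3 / 2) + p 1 * -(1 / 2) ≤ 1 / 2 := by
    rw [show √3 * |p 0| = |√3 * p 0| by rw [abs_mul, abs_of_pos (by positivity : (0 : ℝ) < √3)],
      sub_le_iff_le_add, abs_le]
    constructor <;> rintro ⟨h1, h2⟩ <;> constructor <;> linarith
  simp only [palCover, hexagon_eq_preimage, Set.mem_inter_iff, Set.mem_preimage, Set.mem_ofPred_eq,
    inner_pt, Real.cos_neg, Real.sin_neg, Real.cos_pi_div_six, Real.sin_pi_div_six, hc, hs,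
    planeCoords_apply, closedRegionBetween, Set.mem_Icc, palCoverBottom, max_le_iff, hcut]
  tauto

lemma integral_hexagon_height :
    ∫ t in (0 : ℝ)..(1 / 2), (hexagonTop t - -hexagonTop t) = √3 / 4 := by
  simp only [hexagonTop]
  rw [intervalIntegral.integral_congr (g := fun t => 2 / √3 + (-(2 / √3)) * t)
    (fun t _ => by simp only; ring), integral_const_add_mul]
  field_simp
  nlinarith [sqrt_three_mul_self]

lemma palCoverBottom_of_le {t : ℝ} (ht : t ≤ (√3 - 1) / 2) :
    palCoverBottom t = -hexagonTop t := by
  refine max_eq_left ?_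
  rw [hexagonTop, ← neg_div, le_div_iff₀ (by positivity)]
  linear_combination 2 * ht + t * sqrt_three_mul_self

lemma palCoverBottom_of_ge {t : ℝ} (ht : (√3 - 1) / 2 ≤ t) : palCoverBottom t = √3 * t - 1 := by
  refine max_eq_right ?_
  rw [hexagonTop, ← neg_div, div_le_iff₀ (by positivity)]
  linear_combination 2 * ht - t * sqrt_three_mul_self

lemma palCoverBottom_le_hexagonTop {t : ℝ} (ht : t ≤ 1 / 2) : palCoverBottom t ≤ hexagonTop t := by
  refine max_le (neg_le_self (hexagonTop_nonneg (by linarith))) ?_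
  rw [hexagonTop, le_div_iff₀ (by positivity)]
  linear_combination 4 * ht + one_lt_sqrt_three + t * sqrt_three_mul_self

lemma integral_palCover_height :
    ∫ t in (0 : ℝ)..(1 / 2), (hexagonTop t - palCoverBottom t) = 1 - 1 / √3 := by
  set r := (√3 - 1) / 2 with hr
  have hr0 : 0 ≤ r := by linarith [one_lt_sqrt_three]
  have hr1 : r ≤ 1 / 2 := by linarith [sqrt_three_lt_two]
  have hcont : Continuous fun t => hexagonTop t - palCoverBottom t :=
    continuous_hexagonTop.sub continuous_palCoverBottom
  have hlow : ∫ t in (0 : ℝ)..r, (hexagonTop t - palCoverBottom t) =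
      ∫ t in (0 : ℝ)..r, (2 / √3 + -(2 / √3) * t) := by
    refine intervalIntegral.integral_congr fun t ht => ?_
    rw [Set.uIcc_of_le hr0] at ht
    simp only [palCoverBottom_of_le ht.2, hexagonTop]
    ring
  have hhigh : ∫ t in r..(1 / 2), (hexagonTop t - palCoverBottom t) =
      ∫ t in r..(1 / 2), ((1 / √3 + 1) + -(1 / √3 + √3) * t) := by
    refine intervalIntegral.integral_congr fun t ht => ?_
    rw [Set.uIcc_of_le hr1] at ht
    simp only [palCoverBottom_of_ge ht.1, hexagonTop]
    ring
  rw [← intervalIntegral.integral_add_adjacent_intervals (b := r) (hcont.intervalIntegrable _ _)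
    (hcont.intervalIntegrable _ _), hlow, hhigh, integral_const_add_mul, integral_const_add_mul, hr]
  field_simp
  nlinarith [sqrt_three_mul_self]

theorem hexagon_and_pal_area :
    volume hexagon = ENNReal.ofReal (Real.sqrt 3 / 2) ∧
    volume palCover = ENNReal.ofReal (2 - 2 / Real.sqrt 3) := by
  constructor
  · rw [hexagon_eq_preimage, measurePreserving_planeCoords.measure_preimage_equiv,
      volume_closedRegionBetween_comp_abs (φ := fun t => -hexagonTop t)
        continuous_hexagonTop.neg continuous_hexagonTop (a := 1 / 2) (by norm_num),
      integral_hexagon_height]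
    · congr 1; ring
    · exact fun t ht => neg_le_self (hexagonTop_nonneg (by linarith [ht.2]))
  · rw [palCover_eq_preimage, measurePreserving_planeCoords.measure_preimage_equiv,
      volume_closedRegionBetween_comp_abs continuous_palCoverBottom continuous_hexagonTop
        (a := 1 / 2) (by norm_num), integral_palCover_height]
    · congr 1; ring
    · exact fun t ht => palCoverBottom_le_hexagonTop ht.2
end
end
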